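/- The assignment (q,x) ↦ v_q^x is injective: if p, q ∈ ℚ∞ and x, y ∈ H satisfy v_p^x = v_q^y, then p = q and x = y. -/
import Mathlib


open Matrix

abbrev V6 := Fin 6 → ℤ

def C6 : Matrix (Fin 6) (Fin 6) ℤ :=
  !![1,0,-1,-1,1,1;
     0,1,-1,-1,1,1;
     0,0,1,0,-1,-1;
     0,0,0,1,-1,-1;
     0,0,0,0,1,0;
     0,0,0,0,0,1]

/-- The bilinear form `⟨x,y⟩ = xᵀ C y` on `ℤ^6`. -/
def form (x y : V6) : ℤ := x ⬝ᵥ C6.mulVec y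

/-- The quaternion `i`. -/
def qI : Quaternion ℤ := ⟨0,1,0,0⟩
/-- The quaternion `j`. -/
def qJ : Quaternion ℤ := ⟨0,0,1,0⟩
/-- The quaternion `k`. -/
def qK : Quaternion ℤ := ⟨0,0,0,1⟩

instance : DecidableEq (Quaternion ℤ) := fun x y =>
  decidable_of_iff (x.re = y.re ∧ x.imI = y.imI ∧ x.imJ = y.imJ ∧ x.imK = y.imK)
    ⟨fun ⟨h1, h2, h3, h4⟩ => QuaternionAlgebra.ext h1 h2 h3 h4,
     fun h => by subst h; exact ⟨rfl, rfl, rfl, rfl⟩⟩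

/-- The quaternion group `H = {±1, ±i, ±j, ±k}`. -/
def Hset : Finset (Quaternion ℤ) := {1, -1, qI, -qI, qJ, -qJ, qK, -qK}

/-- The subset `H⁺ = {1, i, j, k}`. -/
def Hplus : Finset (Quaternion ℤ) := {1, qI, qJ, qK}

/-- Index type for the three special slopes `0`, `1`, `∞`. -/
inductive Ty | zero | one | inf
deriving DecidableEq

def h0 : V6 := ![0,0,1,1,1,1]
def h1 : V6 := ![1,1,2,2,1,1]
def hinf : V6 := ![1,1,1,1,0,0]

def hTy : Ty → V6
  | .zero => h0
  | .one => h1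
  | .inf => hinf

/-- The vectors `v_t^x` for `t ∈ {0,1,∞}` and `x ∈ H⁺`. -/
def vposTy : Ty → Quaternion ℤ → V6
  | .zero, x => if x = 1 then ![0,0,1,0,1,0] else if x = qI then ![-1,0,0,0,0,0]
      else if x = qJ then ![0,0,1,0,0,1] else ![0,1,1,1,1,1]
  | .one, x => if x = 1 then ![1,0,1,1,1,0] else if x = qI then ![0,1,1,1,1,0]
      else if x = qJ then ![0,0,1,0,0,0] else ![1,1,2,1,1,1]
  | .inf, x => if x = 1 then ![1,0,0,1,0,0] else if x = qI then ![1,1,1,1,1,0]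
      else if x = qJ then ![0,0,0,0,0,-1] else ![1,0,1,0,0,0]

/-- The vectors `v_t^x` for `t ∈ {0,1,∞}` and `x ∈ H`, with `v_t^{-x} = h_t - v_t^x`. -/
def vTy (t : Ty) (x : Quaternion ℤ) : V6 :=
  if x ∈ Hplus then vposTy t x else hTy t - vposTy t (-x)

/-- `a(q)`: numerator, with `a(∞) = 1`. -/
def aQ : WithTop ℚ → ℤ := WithTop.recTopCoe 1 Rat.num

/-- `b(q)`: denominator, with `b(∞) = 0`. -/
def bQ : WithTop ℚ → ℤ := WithTop.recTopCoe 0 (fun x => (x.den : ℤ))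

/-- The type `t(q) ∈ {0,1,∞}` of a slope `q`. -/
def tyQ (q : WithTop ℚ) : Ty :=
  if aQ q % 2 = 0 then Ty.zero else if bQ q % 2 = 1 then Ty.one else Ty.inf

/-- `⌊n⌋₂ = n/2` for even `n` and `(n-1)/2` for odd `n`. -/
def half2 (n : ℤ) : ℤ := if Even n then n / 2 else (n - 1) / 2

/-- `h_q = b(q)·h₀ + a(q)·h_∞`. -/
def hQ (q : WithTop ℚ) : V6 := bQ q • h0 + aQ q • hinf

/-- `v_q^x = v_{t(q)}^x + ⌊b(q)⌋₂·h₀ + ⌊a(q)⌋₂·h_∞`. -/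
def vQ (q : WithTop ℚ) (x : Quaternion ℤ) : V6 :=
  vTy (tyQ q) x + half2 (bQ q) • h0 + half2 (aQ q) • hinf

/-- `rk e = ⟨e, h_∞⟩`. -/
def rk (e : V6) : ℤ := form e hinf

/-- `deg e = ⟨h₀, e⟩`. -/
def degV (e : V6) : ℤ := form h0 e

/-- `e` is positive if `rk e > 0`, or `rk e = 0` and `deg e > 0`. -/
def PosV (e : V6) : Prop := 0 < rk e ∨ (rk e = 0 ∧ 0 < degV e)

/-- `d(p,q) = |a(q)b(p) - a(p)b(q)|`. -/
def dQ (p q : WithTop ℚ) : ℤ := |aQ q * bQ p - aQ p * bQ q|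

/-- Complexity `c(p) = |a(p)| + |b(p)| + |a(p)+b(p)|`. -/
def cpx (p : WithTop ℚ) : ℤ := |aQ p| + |bQ p| + |aQ p + bQ p|



instance : Fintype Ty := ⟨{Ty.zero, Ty.one, Ty.inf}, by intro t; cases t <;> decide⟩

lemma key5 : ∀ t t' : Ty, ∀ x ∈ Hset, ∀ y ∈ Hset,
    vTy t x 0 - vTy t x 1 = vTy t' y 0 - vTy t' y 1 →
    vTy t x 2 - vTy t x 3 = vTy t' y 2 - vTy t' y 3 →
    vTy t x 4 - vTy t x 5 = vTy t' y 4 - vTy t' y 5 →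
    vTy t x 0 - vTy t x 2 + vTy t x 4 = vTy t' y 0 - vTy t' y 2 + vTy t' y 4 →
    t = t' ∧ x = y := by decide

lemma not_both_even (q : WithTop ℚ) : ¬ (aQ q % 2 = 0 ∧ bQ q % 2 = 0) := by
  rintro ⟨ha, hb⟩
  cases q with
  | top => simp [aQ] at ha
  | coe r =>
    have hc := r.reduced
    have h2a : (2 : ℤ) ∣ r.num := by simpa [aQ] using Int.dvd_of_emod_eq_zero ha
    have h2b : (2 : ℤ) ∣ (r.den : ℤ) := by simpa [bQ] using Int.dvd_of_emod_eq_zero hb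
    have h2a' : 2 ∣ r.num.natAbs := Int.natAbs_dvd_natAbs.mpr h2a
    have h2b' : 2 ∣ r.den := by exact_mod_cast h2b
    have := Nat.dvd_gcd h2a' h2b'
    rw [hc.gcd_eq_one] at this
    omega

lemma half2_eq (n : ℤ) : n = 2 * half2 n + n % 2 := by
  unfold half2
  split
  · next hh => obtain ⟨k, hk⟩ := hh; omega
  · next hh => rw [Int.not_even_iff] at hh; omega

lemma eq_of_abq (p q : WithTop ℚ) (ha : aQ p = aQ q) (hb : bQ p = bQ q) : p = q := by
  cases p with
  | top =>
    cases q with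
    | top => rfl
    | coe r =>
      exfalso
      have : (r.den : ℤ) = 0 := by simpa [bQ] using hb.symm
      have := r.den_nz
      omega
  | coe r =>
    cases q with
    | top =>
      exfalso
      have : (r.den : ℤ) = 0 := by simpa [bQ] using hb
      have := r.den_nz
      omega
    | coe s =>
      have h1 : r.num = s.num := by simpa [aQ] using ha
      have h2 : r.den = s.den := by exact_mod_cast (by simpa [bQ] using hb : (r.den : ℤ) = s.den)
      exact congrArg _ (Rat.ext h1 h2)

lemma ty_parity (q : WithTop ℚ) :
    (tyQ q = Ty.zero → aQ q % 2 = 0 ∧ bQ q % 2 = 1) ∧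
    (tyQ q = Ty.one → aQ q % 2 = 1 ∧ bQ q % 2 = 1) ∧
    (tyQ q = Ty.inf → aQ q % 2 = 1 ∧ bQ q % 2 = 0) := by
  have hne := not_both_even q
  have ha := Int.emod_two_eq (aQ q)
  have hb := Int.emod_two_eq (bQ q)
  unfold tyQ
  split <;> rename_i h1
  · refine ⟨fun _ => ⟨h1, by omega⟩, fun h => by simp at h, fun h => by simp at h⟩
  · split <;> rename_i h2
    · exact ⟨fun h => by simp at h, fun _ => ⟨by omega, h2⟩, fun h => by simp at h⟩
    · exact ⟨fun h => by simp at h, fun h => by simp at h, fun _ => ⟨by omega, by omega⟩⟩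

/-- injectivity of `(q,x) ↦ v_q^x`. -/
theorem stmt5 (p q : WithTop ℚ) (x y : Quaternion ℤ) (hx : x ∈ Hset) (hy : y ∈ Hset)
    (h : vQ p x = vQ q y) : p = q ∧ x = y := by
  have e0 := congrFun h 0
  have e1 := congrFun h 1
  have e2 := congrFun h 2
  have e3 := congrFun h 3
  have e4 := congrFun h 4
  have e5 := congrFun h 5
  simp only [vQ, Pi.add_apply, Pi.smul_apply, smul_eq_mul,
    show h0 0 = 0 from rfl, show h0 1 = 0 from rfl, show h0 2 = 1 from rfl,
    show h0 3 = 1 from rfl, show h0 4 = 1 from rfl, show h0 5 = 1 from rfl,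
    show hinf 0 = 1 from rfl, show hinf 1 = 1 from rfl, show hinf 2 = 1 from rfl,
    show hinf 3 = 1 from rfl, show hinf 4 = 0 from rfl, show hinf 5 = 0 from rfl,
    mul_zero, mul_one, add_zero] at e0 e1 e2 e3 e4 e5
  have hkey := key5 (tyQ p) (tyQ q) x hx y hy (by omega) (by omega) (by omega) (by omega)
  obtain ⟨ht, hxy⟩ := hkey
  subst hxy
  rw [ht] at e0 e4
  have hha : half2 (aQ p) = half2 (aQ q) := by omega
  have hhb : half2 (bQ p) = half2 (bQ q) := by omega
  have hp := ty_parity p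
  have hq := ty_parity q
  rw [ht] at hp
  have hparA : aQ p % 2 = aQ q % 2 := by
    cases htq : tyQ q
    · have h1 := hp.1 htq; have h2 := hq.1 htq; omega
    · have h1 := hp.2.1 htq; have h2 := hq.2.1 htq; omega
    · have h1 := hp.2.2 htq; have h2 := hq.2.2 htq; omega
  have hparB : bQ p % 2 = bQ q % 2 := by
    cases htq : tyQ q
    · have h1 := hp.1 htq; have h2 := hq.1 htq; omega
    · have h1 := hp.2.1 htq; have h2 := hq.2.1 htq; omega
    · have h1 := hp.2.2 htq; have h2 := hq.2.2 htq; omega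
  have ha2p := half2_eq (aQ p)
  have ha2q := half2_eq (aQ q)
  have hb2p := half2_eq (bQ p)
  have hb2q := half2_eq (bQ q)
  exact ⟨eq_of_abq p q (by omega) (by omega), rfl⟩
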